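/- Let 𝒜 be a prime unital ∗-algebra over ℂ containing a nontrivial projection P₁, let P₂ = I − P₁, and let Φ : 𝒜 → 𝒜 be a nonlinear ⋄-derivation such that Φ(I/2) and Φ(iI/2) are self-adjoint. Then for each i ∈ {1, 2} and all A_{ii}, B_{ii} ∈ 𝒜_{ii} one has Φ(A_{ii} + B_{ii}) = Φ(A_{ii}) + Φ(B_{ii}). -/

import Mathlib

/-!
For `T = Φ (x + y) - Φ x - Φ y`, expanding `Φ (w ⋄ (x + y))` by the derivation rule shows
`w ⋄ T = 0` whenever `Φ (w ⋄ (x + y)) = Φ (w ⋄ x) + Φ (w ⋄ y)`; if this holds for `w` and for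
`i • w`, then even `w* T = 0`. With `Q = 1 - P` such splittings are obtained successively for
`x ∈ P𝒜, y ∈ Q𝒜`, for `x, y ∈ P𝒜Q` (where `T` is played off against the defect at `-x*, -y*`
through `Φ (z - z*) = Φ 1 ⋄ z + Φ z - (Φ z)*`), and for `x, y ∈ P𝒜P` (probing with `w ∈ P𝒜Q`:
then `w ⋄ x` has one component in `P𝒜Q` and one in `Q𝒜P`). Each time `P T = 0` and `Q T = 0`,
primeness turning `P 𝒜 Q T = 0` into `Q T = 0`.
-/

def IsPrimeRing (A : Type*) [Ring A] : Prop :=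
  ∀ a b : A, (∀ x, a * x * b = 0) → a = 0 ∨ b = 0

theorem eq_zero_of_mul_eq_zero_of_one_sub_mul_eq_zero {A : Type*} [Ring A] {p t : A}
    (h₁ : p * t = 0) (h₂ : (1 - p) * t = 0) : t = 0 := by
  rwa [sub_mul, one_mul, h₁, sub_zero] at h₂

section Peirce

variable {A : Type*} [Ring A] [Algebra ℂ A] {e f g h x y : A}

/-- For idempotents `e`, `f` this is the Peirce space `e 𝒜 f`; `peirceSpace e 1 = e 𝒜`. -/
def peirceSpace (e f : A) : Submodule ℂ A where
  carrier := {x | e * x = x ∧ x * f = x}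
  add_mem' {x y} hx hy := ⟨by rw [mul_add, hx.1, hy.1], by rw [add_mul, hx.2, hy.2]⟩
  zero_mem' := ⟨mul_zero e, zero_mul f⟩
  smul_mem' c x hx := ⟨by rw [mul_smul_comm, hx.1], by rw [smul_mul_assoc, hx.2]⟩

theorem mem_peirceSpace_one (hx : x ∈ peirceSpace e f) : x ∈ peirceSpace e 1 :=
  ⟨hx.1, mul_one x⟩

theorem mul_mul_mem_peirceSpace (he : IsIdempotentElem e) (hf : IsIdempotentElem f) (y : A) :
    e * y * f ∈ peirceSpace e f :=
  ⟨by rw [← mul_assoc, ← mul_assoc, he.eq], by rw [mul_assoc, hf.eq]⟩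

theorem self_mem_peirceSpace (he : IsIdempotentElem e) : e ∈ peirceSpace e e :=
  ⟨he.eq, he.eq⟩

theorem mul_mem_peirceSpace (hx : x ∈ peirceSpace e f) (hy : y ∈ peirceSpace g h) :
    x * y ∈ peirceSpace e h :=
  ⟨by rw [← mul_assoc, hx.1], by rw [mul_assoc, hy.2]⟩

theorem mul_eq_zero_of_mem_peirceSpace (hx : x ∈ peirceSpace e f) (hy : y ∈ peirceSpace g h)
    (hfg : f * g = 0) : x * y = 0 := by
  rw [← hx.2, ← hy.1, mul_assoc, ← mul_assoc f, hfg, zero_mul, mul_zero]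

theorem star_mem_peirceSpace [StarRing A] (he : IsSelfAdjoint e) (hf : IsSelfAdjoint f)
    (hx : x ∈ peirceSpace e f) : star x ∈ peirceSpace f e :=
  ⟨by rw [← hf.star_eq, ← star_mul, hx.2], by rw [← he.star_eq, ← star_mul, hx.1]⟩

end Peirce

section Diamond

variable {A : Type*} [Ring A] [StarRing A]

def diamond (a b : A) : A := star a * b - star b * a

local infixl:70 " ⋄ " => diamond

theorem diamond_add_right (a b c : A) : a ⋄ (b + c) = a ⋄ b + a ⋄ c := by
  simp only [diamond, mul_add, star_add, add_mul]; abel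

theorem diamond_sub_right (a b c : A) : a ⋄ (b - c) = a ⋄ b - a ⋄ c := by
  simp only [diamond, mul_sub, star_sub, sub_mul]; abel

theorem one_diamond (a : A) : 1 ⋄ a = a - star a := by
  simp [diamond]

theorem diamond_eq_zero_of_mul_eq_zero {a b : A} (h₁ : star a * b = 0) (h₂ : star b * a = 0) :
    a ⋄ b = 0 := by
  rw [diamond, h₁, h₂, sub_zero]

theorem two_smul_star_mul_eq [Algebra ℂ A] [StarModule ℂ A] (a b : A) :
    (2 : ℂ) • (star a * b) = a ⋄ b + Complex.I • ((Complex.I • a) ⋄ b) := by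
  simp only [diamond, star_smul, smul_mul_assoc, mul_smul_comm, Complex.star_def, Complex.conj_I,
    smul_sub, smul_smul, Complex.I_mul_I]
  match_scalars <;> norm_num

theorem star_mul_eq_zero_of_diamond_eq_zero [Algebra ℂ A] [StarModule ℂ A] {a b : A}
    (h : a ⋄ b = 0) (hI : (Complex.I • a) ⋄ b = 0) : star a * b = 0 := by
  have := two_smul_star_mul_eq a b
  rw [h, hI, smul_zero, add_zero] at this
  exact (smul_eq_zero.mp this).resolve_left two_ne_zero

def IsDiamondDerivation (Φ : A → A) : Prop :=
  ∀ a b, Φ (a ⋄ b) = Φ a ⋄ b + a ⋄ Φ b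

namespace IsDiamondDerivation

variable {Φ : A → A}

theorem map_zero (hΦ : IsDiamondDerivation Φ) : Φ 0 = 0 := by
  simpa [diamond] using hΦ 0 0

theorem map_sub_star (hΦ : IsDiamondDerivation Φ) (x : A) :
    Φ (x - star x) = Φ 1 ⋄ x + (Φ x - star (Φ x)) := by
  simpa only [one_diamond] using hΦ 1 x

theorem diamond_defect_eq_zero (hΦ : IsDiamondDerivation Φ) {w x y : A}
    (h : Φ (w ⋄ (x + y)) = Φ (w ⋄ x) + Φ (w ⋄ y)) :
    w ⋄ (Φ (x + y) - Φ x - Φ y) = 0 := by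
  rw [hΦ, hΦ, hΦ, diamond_add_right] at h
  rw [diamond_sub_right, diamond_sub_right, sub_sub, sub_eq_zero]
  exact add_left_cancel (h.trans (by abel))

variable [Algebra ℂ A] [StarModule ℂ A]

theorem star_mul_defect_eq_zero (hΦ : IsDiamondDerivation Φ) {w x y : A}
    (h : Φ (w ⋄ (x + y)) = Φ (w ⋄ x) + Φ (w ⋄ y))
    (hI : Φ ((Complex.I • w) ⋄ (x + y)) = Φ ((Complex.I • w) ⋄ x) + Φ ((Complex.I • w) ⋄ y)) :
    star w * (Φ (x + y) - Φ x - Φ y) = 0 :=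
  star_mul_eq_zero_of_diamond_eq_zero (hΦ.diamond_defect_eq_zero h) (hΦ.diamond_defect_eq_zero hI)

theorem star_mul_defect_eq_zero_of_orthogonal (hΦ : IsDiamondDerivation Φ) {w y : A} (x : A)
    (h₁ : star w * y = 0) (h₂ : star y * w = 0) :
    star w * (Φ (x + y) - Φ x - Φ y) = 0 := by
  have hsplit : ∀ v : A, star v * y = 0 → star y * v = 0 →
      Φ (v ⋄ (x + y)) = Φ (v ⋄ x) + Φ (v ⋄ y) := fun v hv₁ hv₂ => by
    rw [diamond_add_right, diamond_eq_zero_of_mul_eq_zero hv₁ hv₂, add_zero, hΦ.map_zero, add_zero]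
  refine hΦ.star_mul_defect_eq_zero (hsplit w h₁ h₂) (hsplit _ ?_ ?_)
  · rw [star_smul, smul_mul_assoc, h₁, smul_zero]
  · rw [mul_smul_comm, h₂, smul_zero]

variable {P x y : A}

theorem mul_defect_eq_zero_of_mem_peirceSpace (hΦ : IsDiamondDerivation Φ)
    (hP : IsStarProjection P) (x : A) (hy : y ∈ peirceSpace (1 - P) 1) :
    P * (Φ (x + y) - Φ x - Φ y) = 0 := by
  have hPP := self_mem_peirceSpace hP.isIdempotentElem
  have h := hΦ.star_mul_defect_eq_zero_of_orthogonal x (w := P)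
    (by rw [hP.isSelfAdjoint.star_eq]
        exact mul_eq_zero_of_mem_peirceSpace hPP hy hP.mul_one_sub_self)
    (mul_eq_zero_of_mem_peirceSpace (star_mem_peirceSpace hP.one_sub.isSelfAdjoint (.one _) hy)
      hPP hP.one_sub_mul_self)
  rwa [hP.isSelfAdjoint.star_eq] at h

theorem map_add_of_mem_peirceSpace_one (hΦ : IsDiamondDerivation Φ) (hP : IsStarProjection P)
    (hx : x ∈ peirceSpace P 1) (hy : y ∈ peirceSpace (1 - P) 1) :
    Φ (x + y) = Φ x + Φ y := by
  have h₁ := hΦ.mul_defect_eq_zero_of_mem_peirceSpace hP x hy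
  have h₂ := hΦ.mul_defect_eq_zero_of_mem_peirceSpace hP.one_sub y (by rwa [sub_sub_cancel])
  rw [add_comm y, sub_right_comm] at h₂
  rw [← sub_eq_zero, ← sub_sub]
  exact eq_zero_of_mul_eq_zero_of_one_sub_mul_eq_zero h₁ h₂

theorem one_sub_mul_defect_eq_zero_of_mem_peirceSpace (hΦ : IsDiamondDerivation Φ)
    (hprime : IsPrimeRing A)
    (hP : IsStarProjection P) (hP0 : P ≠ 0) (x : A) (hy : y ∈ peirceSpace P (1 - P)) :
    (1 - P) * (Φ (x + y) - Φ x - Φ y) = 0 := by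
  refine (hprime P _ fun z => ?_).resolve_left hP0
  have hw := mul_mul_mem_peirceSpace hP.one_sub.isIdempotentElem hP.isIdempotentElem (star z)
  have h := hΦ.star_mul_defect_eq_zero_of_orthogonal x
    (mul_eq_zero_of_mem_peirceSpace
      (star_mem_peirceSpace hP.one_sub.isSelfAdjoint hP.isSelfAdjoint hw) hy hP.one_sub_mul_self)
    (mul_eq_zero_of_mem_peirceSpace
      (star_mem_peirceSpace hP.isSelfAdjoint hP.one_sub.isSelfAdjoint hy) hw hP.mul_one_sub_self)
  simpa only [star_mul, star_star, hP.isSelfAdjoint.star_eq, hP.one_sub.isSelfAdjoint.star_eq,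
    mul_assoc] using h

theorem defect_add_defect_neg_star_eq_zero (hΦ : IsDiamondDerivation Φ) (hP : IsStarProjection P)
    (hx : x ∈ peirceSpace P (1 - P)) (hy : y ∈ peirceSpace P (1 - P)) :
    (Φ (x + y) - Φ x - Φ y) + (Φ (-star x + -star y) - Φ (-star x) - Φ (-star y)) = 0 := by
  have hs : ∀ {z}, z ∈ peirceSpace P (1 - P) → -star z ∈ peirceSpace (1 - P) 1 := fun hz =>
    neg_mem (mem_peirceSpace_one
      (star_mem_peirceSpace hP.isSelfAdjoint hP.one_sub.isSelfAdjoint hz))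
  have hx₁ := mem_peirceSpace_one hx
  have hy₁ := mem_peirceSpace_one hy
  have e₁ := hΦ.map_sub_star (x + -star y)
  have e₂ := hΦ.map_sub_star x
  have e₃ := hΦ.map_sub_star (-star y)
  rw [show x + -star y - star (x + -star y) = (x + y) + (-star x + -star y) by
      simp only [star_add, star_neg, star_star]; abel,
    hΦ.map_add_of_mem_peirceSpace_one hP (add_mem hx₁ hy₁) (add_mem (hs hx) (hs hy)),
    hΦ.map_add_of_mem_peirceSpace_one hP hx₁ (hs hy), diamond_add_right, star_add] at e₁
  rw [sub_eq_add_neg, hΦ.map_add_of_mem_peirceSpace_one hP hx₁ (hs hx)] at e₂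
  rw [show -star y - star (-star y) = y + -star y by simp only [star_neg, star_star]; abel,
    hΦ.map_add_of_mem_peirceSpace_one hP hy₁ (hs hy)] at e₃
  calc _ = (Φ (x + y) + Φ (-star x + -star y)) - (Φ x + Φ (-star x)) - (Φ y + Φ (-star y)) := by
        abel
    _ = 0 := by rw [e₁, e₂, e₃]; abel

theorem map_add_of_mem_peirceSpace_one_sub (hΦ : IsDiamondDerivation Φ)
    (hprime : IsPrimeRing A)
    (hP : IsStarProjection P) (hP0 : P ≠ 0) (hQ0 : 1 - P ≠ 0)
    (hx : x ∈ peirceSpace P (1 - P)) (hy : y ∈ peirceSpace P (1 - P)) :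
    Φ (x + y) = Φ x + Φ y := by
  have hQT := hΦ.one_sub_mul_defect_eq_zero_of_mem_peirceSpace hprime hP hP0 x hy
  have hPT' : P * (Φ (-star x + -star y) - Φ (-star x) - Φ (-star y)) = 0 := by
    simpa only [sub_sub_cancel] using
      hΦ.one_sub_mul_defect_eq_zero_of_mem_peirceSpace hprime hP.one_sub hQ0 (-star x)
        (by rw [sub_sub_cancel]
            exact neg_mem (star_mem_peirceSpace hP.isSelfAdjoint hP.one_sub.isSelfAdjoint hy))
  have hPT : P * (Φ (x + y) - Φ x - Φ y) = 0 := by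
    rw [eq_neg_of_add_eq_zero_left (hΦ.defect_add_defect_neg_star_eq_zero hP hx hy), mul_neg,
      hPT', neg_zero]
  rw [← sub_eq_zero, ← sub_sub]
  exact eq_zero_of_mul_eq_zero_of_one_sub_mul_eq_zero hPT hQT

theorem map_diamond_add_of_mem_peirceSpace_self (hΦ : IsDiamondDerivation Φ)
    (hprime : IsPrimeRing A)
    (hP : IsStarProjection P) (hP0 : P ≠ 0) (hQ0 : 1 - P ≠ 0) {c : A}
    (hc : c ∈ peirceSpace P (1 - P)) (hx : x ∈ peirceSpace P P) (hy : y ∈ peirceSpace P P) :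
    Φ (c ⋄ (x + y)) = Φ (c ⋄ x) + Φ (c ⋄ y) := by
  have hl : ∀ {z}, z ∈ peirceSpace P P → -(star z * c) ∈ peirceSpace P (1 - P) := fun hz =>
    neg_mem (mul_mem_peirceSpace (star_mem_peirceSpace hP.isSelfAdjoint hP.isSelfAdjoint hz) hc)
  have hr : ∀ {z}, z ∈ peirceSpace P P → star c * z ∈ peirceSpace (1 - P) (1 - (1 - P)) :=
    fun hz => by
      rw [sub_sub_cancel]
      exact mul_mem_peirceSpace
        (star_mem_peirceSpace hP.isSelfAdjoint hP.one_sub.isSelfAdjoint hc) hz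
  have hsplit : ∀ {z}, z ∈ peirceSpace P P → Φ (c ⋄ z) = Φ (-(star z * c)) + Φ (star c * z) :=
    fun hz => by
      rw [diamond, ← neg_add_eq_sub]
      exact hΦ.map_add_of_mem_peirceSpace_one hP (mem_peirceSpace_one (hl hz))
        (mem_peirceSpace_one (hr hz))
  have e : c ⋄ (x + y) = (-(star x * c) + -(star y * c)) + (star c * x + star c * y) := by
    simp only [diamond, star_add, mul_add, add_mul]; abel
  rw [e, hΦ.map_add_of_mem_peirceSpace_one hP (mem_peirceSpace_one (add_mem (hl hx) (hl hy)))
      (mem_peirceSpace_one (add_mem (hr hx) (hr hy))),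
    hΦ.map_add_of_mem_peirceSpace_one_sub hprime hP hP0 hQ0 (hl hx) (hl hy),
    hΦ.map_add_of_mem_peirceSpace_one_sub hprime hP.one_sub hQ0 (by rwa [sub_sub_cancel])
      (hr hx) (hr hy),
    hsplit hx, hsplit hy]
  abel

theorem map_add_of_mem_peirceSpace_self (hΦ : IsDiamondDerivation Φ)
    (hprime : IsPrimeRing A)
    (hP : IsStarProjection P) (hP0 : P ≠ 0) (hQ0 : 1 - P ≠ 0)
    (hx : x ∈ peirceSpace P P) (hy : y ∈ peirceSpace P P) :
    Φ (x + y) = Φ x + Φ y := by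
  have hQT : (1 - P) * (Φ (x + y) - Φ x - Φ y) = 0 :=
    hΦ.mul_defect_eq_zero_of_mem_peirceSpace hP.one_sub x
      (by rw [sub_sub_cancel]; exact mem_peirceSpace_one hy)
  have hPT : P * (Φ (x + y) - Φ x - Φ y) = 0 := by
    refine (hprime (1 - P) _ fun z => ?_).resolve_left hQ0
    have hc := mul_mul_mem_peirceSpace hP.isIdempotentElem hP.one_sub.isIdempotentElem (star z)
    have h := hΦ.star_mul_defect_eq_zero
      (hΦ.map_diamond_add_of_mem_peirceSpace_self hprime hP hP0 hQ0 hc hx hy)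
      (hΦ.map_diamond_add_of_mem_peirceSpace_self hprime hP hP0 hQ0
        (Submodule.smul_mem _ Complex.I hc) hx hy)
    simpa only [star_mul, star_star, hP.isSelfAdjoint.star_eq, hP.one_sub.isSelfAdjoint.star_eq,
      mul_assoc] using h
  rw [← sub_eq_zero, ← sub_sub]
  exact eq_zero_of_mul_eq_zero_of_one_sub_mul_eq_zero hPT hQT

end IsDiamondDerivation

end Diamond

theorem stmt10_general {𝒜 : Type*} [Ring 𝒜] [Algebra ℂ 𝒜] [StarRing 𝒜] [StarModule ℂ 𝒜]
    (hprime : ∀ a b : 𝒜, (∀ x : 𝒜, a * x * b = 0) → a = 0 ∨ b = 0)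
    (P₁ : 𝒜) (hP₁star : star P₁ = P₁) (hP₁idem : P₁ * P₁ = P₁)
    (hP₁ne0 : P₁ ≠ 0) (hP₁ne1 : P₁ ≠ 1)
    (Φ : 𝒜 → 𝒜)
    (hΦ : ∀ A B : 𝒜, Φ (star A * B - star B * A) =
      (star (Φ A) * B - star B * Φ A) + (star A * Φ B - star (Φ B) * A)) :
    ∀ P : 𝒜, (P = P₁ ∨ P = 1 - P₁) →
      ∀ A B : 𝒜, (∃ x : 𝒜, A = P * x * P) → (∃ x : 𝒜, B = P * x * P) →
        Φ (A + B) = Φ A + Φ B := by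
  have hΦ' : IsDiamondDerivation Φ := hΦ
  have hP₁ : IsStarProjection P₁ := ⟨hP₁idem, hP₁star⟩
  have hQ₁ : IsStarProjection (1 - P₁) := hP₁.one_sub
  have hQ₁ne0 : 1 - P₁ ≠ 0 := sub_ne_zero.2 hP₁ne1.symm
  rintro P (rfl | rfl) A B ⟨x, rfl⟩ ⟨y, rfl⟩
  · exact hΦ'.map_add_of_mem_peirceSpace_self hprime hP₁ hP₁ne0 hQ₁ne0
      (mul_mul_mem_peirceSpace hP₁.isIdempotentElem hP₁.isIdempotentElem x)
      (mul_mul_mem_peirceSpace hP₁.isIdempotentElem hP₁.isIdempotentElem y)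
  · exact hΦ'.map_add_of_mem_peirceSpace_self hprime hQ₁ hQ₁ne0 (by rwa [sub_sub_cancel])
      (mul_mul_mem_peirceSpace hQ₁.isIdempotentElem hQ₁.isIdempotentElem x)
      (mul_mul_mem_peirceSpace hQ₁.isIdempotentElem hQ₁.isIdempotentElem y)

/-- In a prime unital ∗-algebra over `ℂ` with nontrivial projection `P₁`
and `P₂ = I − P₁`, a nonlinear `⋄`-derivation `Φ` with `Φ(I/2)`, `Φ(iI/2)` self-adjoint
is additive on each diagonal Peirce component `𝒜_{ii}`, where the projection `P`
ranges over `P₁` and `P₂ = 1 − P₁`. -/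
theorem stmt10 {𝒜 : Type*} [Ring 𝒜] [Algebra ℂ 𝒜] [StarRing 𝒜] [StarModule ℂ 𝒜]
    (hprime : ∀ a b : 𝒜, (∀ x : 𝒜, a * x * b = 0) → a = 0 ∨ b = 0)
    (P₁ : 𝒜) (hP₁star : star P₁ = P₁) (hP₁idem : P₁ * P₁ = P₁)
    (hP₁ne0 : P₁ ≠ 0) (hP₁ne1 : P₁ ≠ 1)
    (Φ : 𝒜 → 𝒜)
    (hΦ : ∀ A B : 𝒜, Φ (star A * B - star B * A) =
      (star (Φ A) * B - star B * Φ A) + (star A * Φ B - star (Φ B) * A))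
    (h1 : star (Φ (((1 : ℂ)/2) • (1 : 𝒜))) = Φ (((1 : ℂ)/2) • (1 : 𝒜)))
    (h2 : star (Φ ((Complex.I/2) • (1 : 𝒜))) = Φ ((Complex.I/2) • (1 : 𝒜))) :
    ∀ P : 𝒜, (P = P₁ ∨ P = 1 - P₁) →
      ∀ A B : 𝒜, (∃ x : 𝒜, A = P * x * P) → (∃ x : 𝒜, B = P * x * P) →
        Φ (A + B) = Φ A + Φ B :=
  stmt10_general hprime P₁ hP₁star hP₁idem hP₁ne0 hP₁ne1 Φ hΦ
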